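/- Let H be a Hilbert space, C : dom(C) ⊆ H → H quasi-m-accretive, α ∈ L(H) with α[dom(C)] ⊆ dom(C) and [α,C] continuous. Then (αC)* = cl(α*C*) + cl([C*, α*]). -/

import Mathlib

open Filter Topology

noncomputable section

variable {H : Type*} [NormedAddCommGroup H] [InnerProductSpace ℝ H]

/-- `Rη` is the resolvent `(1 + η C)⁻¹` of the (generally unbounded) operator `C`. -/
def IsResolvent (C : H →ₗ.[ℝ] H) (η : ℝ) (Rη : H →L[ℝ] H) : Prop :=
  (∀ x : C.domain, Rη ((x : H) + η • C x) = x) ∧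
  (∀ y : H, ∃ h : Rη y ∈ C.domain, Rη y + η • C ⟨Rη y, h⟩ = y)

/-- `C` is quasi-m-accretive, witnessed by the resolvent family `Res` on `[0, η₀]`. -/
def IsQuasiMAccretiveWith (C : H →ₗ.[ℝ] H) (Res : ℝ → H →L[ℝ] H) (η₀ M : ℝ) : Prop :=
  0 < η₀ ∧ ∀ η ∈ Set.Icc (0 : ℝ) η₀, IsResolvent C η (Res η) ∧ ‖Res η‖ ≤ M

/-- Composition `L ∘ C` of a bounded operator with an unbounded one, domain `dom C`. -/
def lcompPMap (L : H →L[ℝ] H) (C : H →ₗ.[ℝ] H) : H →ₗ.[ℝ] H :=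
  ⟨C.domain, (L : H →ₗ[ℝ] H).comp C.toFun⟩

/-!
`α* C* + T'` is a formal adjoint of `αC`, hence lies below the closed operator `(αC)*`; this gives
one inclusion and the closability of `α* C*`. Conversely, for `v ∈ dom (αC)*` the vectors `R_η* v`
lie in `dom C*` and tend to `v` as `η → 0`, since the adjoint resolvents are uniformly bounded and
converge on the dense set `dom C*`. The commutation relation `R_η α = α R_η + η R_η T R_η` gives
`α* C* R_η* v = R_η* (αC)* v - R_η* T* R_η* v`, which tends to `(αC)* v - T' v` because `T* = T'`.
-/

namespace LinearPMap

section Algebraic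

variable {R E F : Type*} [Ring R] [AddCommGroup E] [Module R E] [AddCommGroup F] [Module R F]

theorem mem_graph_add_toPMap_top_iff (f : E →ₗ.[R] F) (S : E →ₗ[R] F) {p : E × F} :
    p ∈ (f + S.toPMap ⊤).graph ↔ (p.1, p.2 - S p.1) ∈ f.graph := by
  obtain ⟨x, y⟩ := p
  simp only [mem_graph_iff]
  constructor
  · rintro ⟨⟨x', hx', -⟩, rfl, rfl⟩
    exact ⟨⟨x', hx'⟩, rfl, (add_sub_cancel_right _ _).symm⟩
  · rintro ⟨⟨x', hx'⟩, rfl, hy⟩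
    exact ⟨⟨x', hx', trivial⟩, rfl, eq_sub_iff_add_eq.mp hy⟩

theorem le_add_toPMap_top_neg {f g : E →ₗ.[R] F} {S : E →ₗ[R] F} (h : f + S.toPMap ⊤ ≤ g) :
    f ≤ g + (-S).toPMap ⊤ :=
  le_of_le_graph fun p hp => by
    rw [mem_graph_add_toPMap_top_iff, LinearMap.neg_apply, sub_neg_eq_add]
    refine le_graph_of_le h ((mem_graph_add_toPMap_top_iff f S).mpr ?_)
    simpa using hp

end Algebraic

variable {R E F : Type*} [CommRing R] [AddCommGroup E] [Module R E] [AddCommGroup F] [Module R F]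
  [TopologicalSpace E] [TopologicalSpace F] [IsTopologicalAddGroup F]

theorem IsClosed.add_toPMap_top {f : E →ₗ.[R] F} (hf : f.IsClosed) (S : E →L[R] F) :
    (f + (S : E →ₗ[R] F).toPMap ⊤).IsClosed := by
  have hgraph : ((f + (S : E →ₗ[R] F).toPMap ⊤).graph : Set (E × F)) =
      (fun p : E × F => (p.1, p.2 - S p.1)) ⁻¹' f.graph :=
    Set.ext fun p => mem_graph_add_toPMap_top_iff f S
  rw [IsClosed, hgraph]
  exact hf.preimage (by fun_prop)

variable [TopologicalSpace R] [ContinuousAdd E] [ContinuousSMul R E] [ContinuousSMul R F]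

theorem eq_closure_add_toPMap_top {f g : E →ₗ.[R] F} {S : E →L[R] F} (hg : g.IsClosed)
    (hle : f + (S : E →ₗ[R] F).toPMap ⊤ ≤ g)
    (hcl : ∀ v : g.domain, ((v : E), g v - S v) ∈ _root_.closure (f.graph : Set (E × F))) :
    g = f.closure + (S : E →ₗ[R] F).toPMap ⊤ := by
  have hf : f.IsClosable :=
    (hg.add_toPMap_top (-S)).isClosable.leIsClosable (le_add_toPMap_top_neg hle)
  refine eq_of_eq_graph (SetLike.ext fun p => ?_)
  rw [mem_graph_add_toPMap_top_iff, ← hf.graph_closure_eq_closure_graph]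
  simp only [← SetLike.mem_coe, Submodule.topologicalClosure_coe]
  constructor
  · intro hp
    obtain ⟨v, rfl⟩ := (mem_graph_iff' g).mp hp
    exact hcl v
  · intro hp
    have hmaps : Set.MapsTo (fun q : E × F => (q.1, q.2 + S q.1)) f.graph g.graph := fun q hq =>
      le_graph_of_le hle ((mem_graph_add_toPMap_top_iff f S).mpr (by simpa using hq))
    simpa [hg.closure_eq] using map_mem_closure (by fun_prop) hp hmaps

end LinearPMap

section StrongConvergence

variable {ι 𝕜 E F : Type*} [NontriviallyNormedField 𝕜] [NormedAddCommGroup E] [NormedSpace 𝕜 E]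
  [NormedAddCommGroup F] [NormedSpace 𝕜 F] {l : Filter ι} {R : ι → E →L[𝕜] F} {R₀ : E →L[𝕜] F}
  {M : ℝ}

theorem tendsto_apply_of_dense_of_norm_le (hM : ∀ i, ‖R i‖ ≤ M) {D : Set E} (hD : Dense D)
    (hR : ∀ x ∈ D, Tendsto (fun i => R i x) l (𝓝 (R₀ x))) (x : E) :
    Tendsto (fun i => R i x) l (𝓝 (R₀ x)) := by
  have hequi : Equicontinuous fun i => (R i : E → F) :=
    ((NormedSpace.equicontinuous_TFAE R).out 5 1).mp (⟨M, hM⟩ : ∃ C, ∀ i, ‖R i‖ ≤ C)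
  exact (hequi.isClosed_setOfPred_tendsto R₀.continuous).closure_subset_iff.mpr hR (hD x)

theorem tendsto_apply_apply_of_norm_le (hM : ∀ i, ‖R i‖ ≤ M) {z : ι → E} {z₀ : E}
    (hR : Tendsto (fun i => R i z₀) l (𝓝 (R₀ z₀))) (hz : Tendsto z l (𝓝 z₀)) :
    Tendsto (fun i => R i (z i)) l (𝓝 (R₀ z₀)) := by
  have hsmall : Tendsto (fun i => R i (z i - z₀)) l (𝓝 0) := by
    refine squeeze_zero_norm (fun i => (R i).le_of_opNorm_le (hM i) _) ?_
    simpa using (tendsto_iff_norm_sub_tendsto_zero.mp hz).const_mul M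
  simpa using hsmall.add hR

end StrongConvergence

open RealInnerProductSpace ContinuousLinearMap

theorem lcompPMap_apply (L : H →L[ℝ] H) (C : H →ₗ.[ℝ] H) (x : (lcompPMap L C).domain) :
    lcompPMap L C x = L (C ⟨x, x.2⟩) :=
  rfl

namespace IsResolvent

variable {C : H →ₗ.[ℝ] H} {η : ℝ} {R α T : H →L[ℝ] H} {hα : ∀ x ∈ C.domain, α x ∈ C.domain}

theorem mem_domain (h : IsResolvent C η R) (y : H) : R y ∈ C.domain :=
  (h.2 y).1

theorem apply_add_smul_apply (h : IsResolvent C η R) (y : H) :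
    R y + η • C ⟨R y, h.mem_domain y⟩ = y :=
  (h.2 y).2

theorem apply_resolvent (h : IsResolvent C η R) (hη : η ≠ 0) (y : H) :
    C ⟨R y, h.mem_domain y⟩ = η⁻¹ • (y - R y) := by
  rw [eq_inv_smul_iff₀ hη]
  exact eq_sub_of_add_eq' (h.apply_add_smul_apply y)

theorem resolvent_apply (h : IsResolvent C η R) (hη : η ≠ 0) (x : C.domain) :
    R (C x) = η⁻¹ • ((x : H) - R x) := by
  have hx := h.1 x
  rw [map_add, map_smul] at hx
  rw [eq_inv_smul_iff₀ hη]
  exact eq_sub_of_add_eq' hx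

theorem apply_commute_of_commutator (h : IsResolvent C η R)
    (hT : ∀ x : C.domain, T (x : H) = α (C x) - C ⟨α x, hα x x.2⟩) (y : H) :
    R (α y) = α (R y) + η • R (T (R y)) := by
  have hy : α y = (α (R y) + η • C ⟨α (R y), hα _ (h.mem_domain y)⟩) + η • T (R y) := by
    conv_lhs => rw [← h.apply_add_smul_apply y]
    rw [map_add, map_smul, hT ⟨R y, h.mem_domain y⟩]
    module
  rw [hy, map_add, h.1 ⟨α (R y), _⟩, map_smul]

theorem resolvent_apply_commute_of_commutator (h : IsResolvent C η R) (hη : η ≠ 0)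
    (hT : ∀ x : C.domain, T (x : H) = α (C x) - C ⟨α x, hα x x.2⟩) (x : C.domain) :
    R (C ⟨α x, hα x x.2⟩) = α (C ⟨R x, h.mem_domain x⟩) - R (T (R x)) := by
  rw [h.resolvent_apply hη, h.apply_resolvent hη, h.apply_commute_of_commutator hT, map_smul,
    map_sub]
  match_scalars <;> field_simp

variable [CompleteSpace H]

theorem adjoint_apply_mem_adjoint_domain (h : IsResolvent C η R) (hη : η ≠ 0) (v : H) :
    adjoint R v ∈ C.adjoint.domain := by
  refine LinearPMap.mem_adjoint_domain_of_exists _ ⟨η⁻¹ • (v - adjoint R v), fun x => ?_⟩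
  rw [real_inner_smul_left, inner_sub_left, adjoint_inner_left, adjoint_inner_left,
    h.resolvent_apply hη x, real_inner_smul_right, inner_sub_right]

theorem adjoint_apply_add_smul_adjoint (h : IsResolvent C η R) (hdense : Dense (C.domain : Set H))
    (u : C.adjoint.domain) : adjoint R ((u : H) + η • C.adjoint u) = u := by
  refine ext_inner_right ℝ fun y => ?_
  rw [adjoint_inner_left, inner_add_left, real_inner_smul_left,
    LinearPMap.adjoint_isFormalAdjoint hdense u ⟨R y, h.mem_domain y⟩, ← real_inner_smul_right,
    ← inner_add_right, h.apply_add_smul_apply]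

theorem adjoint_lcompPMap_adjoint_apply (h : IsResolvent C η R) (hη : η ≠ 0)
    (hdense : Dense (C.domain : Set H))
    (hT : ∀ x : C.domain, T (x : H) = α (C x) - C ⟨α x, hα x x.2⟩)
    (v : (lcompPMap α C).adjoint.domain) :
    lcompPMap (adjoint α) C.adjoint ⟨adjoint R v, h.adjoint_apply_mem_adjoint_domain hη v⟩ =
      adjoint R ((lcompPMap α C).adjoint v) - adjoint R (adjoint T (adjoint R v)) := by
  refine hdense.eq_of_inner_left ℝ fun x hx => ?_
  have hAv := LinearPMap.adjoint_isFormalAdjoint (T := lcompPMap α C) hdense v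
    ⟨R x, h.mem_domain x⟩
  calc _ = ⟪(v : H), R (C ⟨α x, hα x hx⟩)⟫ := by
        rw [lcompPMap_apply, adjoint_inner_left,
          LinearPMap.adjoint_isFormalAdjoint hdense _ ⟨α x, hα x hx⟩, adjoint_inner_left]
    _ = _ := by
        rw [h.resolvent_apply_commute_of_commutator hη hT ⟨x, hx⟩, inner_sub_right, inner_sub_left,
          adjoint_inner_left, hAv, adjoint_inner_left, adjoint_inner_left, adjoint_inner_left]
        rfl

end IsResolvent

section Commutator

variable [CompleteSpace H] {C : H →ₗ.[ℝ] H} {α T T' : H →L[ℝ] H}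
  {hα : ∀ x ∈ C.domain, α x ∈ C.domain}

theorem adjoint_commutator_eq (hdense : Dense (C.domain : Set H))
    (hdense' : Dense (C.adjoint.domain : Set H))
    (hT : ∀ x : C.domain, T (x : H) = α (C x) - C ⟨α x, hα x x.2⟩)
    (hT' : ∀ v : C.adjoint.domain,
      ∃ h : adjoint α (v : H) ∈ C.adjoint.domain,
        T' (v : H) = C.adjoint ⟨adjoint α (v : H), h⟩ - adjoint α (C.adjoint v)) :
    adjoint T = T' := by
  refine DFunLike.coe_injective <|
    Continuous.ext_on hdense' (adjoint T).continuous T'.continuous fun v hv => ?_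
  obtain ⟨hαv, hT'v⟩ := hT' ⟨v, hv⟩
  refine hdense.eq_of_inner_left ℝ fun x hx => ?_
  rw [hT'v, inner_sub_left, adjoint_inner_left, adjoint_inner_left,
    LinearPMap.adjoint_isFormalAdjoint hdense _ ⟨x, hx⟩,
    LinearPMap.adjoint_isFormalAdjoint hdense _ ⟨α x, hα x hx⟩, adjoint_inner_left,
    hT ⟨x, hx⟩, inner_sub_right]

theorem isFormalAdjoint_lcompPMap_add (hdense : Dense (C.domain : Set H))
    (hT' : ∀ v : C.adjoint.domain,
      ∃ h : adjoint α (v : H) ∈ C.adjoint.domain,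
        T' (v : H) = C.adjoint ⟨adjoint α (v : H), h⟩ - adjoint α (C.adjoint v)) :
    (lcompPMap α C).IsFormalAdjoint
      (lcompPMap (adjoint α) C.adjoint + (T' : H →ₗ[ℝ] H).toPMap ⊤) := by
  intro x w
  obtain ⟨hαw, hT'w⟩ := hT' ⟨w, w.2.1⟩
  have hB : (lcompPMap (adjoint α) C.adjoint + (T' : H →ₗ[ℝ] H).toPMap ⊤) w =
      C.adjoint ⟨adjoint α w, hαw⟩ :=
    (add_comm _ _).trans (eq_sub_iff_add_eq.mp hT'w)
  rw [hB, ← real_inner_comm (x : H), LinearPMap.adjoint_isFormalAdjoint hdense _ ⟨x, x.2⟩,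
    adjoint_inner_left, real_inner_comm]
  rfl

end Commutator

theorem tendsto_adjoint_resolvent_apply [CompleteSpace H] {C : H →ₗ.[ℝ] H}
    (hdense : Dense (C.domain : Set H)) (hdense' : Dense (C.adjoint.domain : Set H))
    {ι : Type*} {l : Filter ι} {η : ι → ℝ} {R : ι → H →L[ℝ] H} {M : ℝ}
    (hR : ∀ i, IsResolvent C (η i) (R i)) (hM : ∀ i, ‖R i‖ ≤ M) (hη : Tendsto η l (𝓝 0))
    (u : H) : Tendsto (fun i => adjoint (R i) u) l (𝓝 u) := by
  have hM' : ∀ i, ‖adjoint (R i)‖ ≤ M := fun i => (adjoint.norm_map (R i)).trans_le (hM i)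
  refine tendsto_apply_of_dense_of_norm_le (R₀ := ContinuousLinearMap.id ℝ H) hM' hdense'
    (fun u hu => ?_) u
  set w := C.adjoint ⟨u, hu⟩
  have heq : ∀ i, adjoint (R i) u = u - η i • adjoint (R i) w := fun i => by
    have := (hR i).adjoint_apply_add_smul_adjoint hdense ⟨u, hu⟩
    rw [map_add, map_smul] at this
    exact eq_sub_of_add_eq this
  have hsmall : Tendsto (fun i => η i • adjoint (R i) w) l (𝓝 0) := by
    refine squeeze_zero_norm (a := fun i => |η i| * (M * ‖w‖)) (fun i => ?_) ?_
    · rw [norm_smul, Real.norm_eq_abs]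
      gcongr
      exact (adjoint (R i)).le_of_opNorm_le (hM' i) w
    · simpa using hη.abs.mul_const (M * ‖w‖)
  simpa [heq] using tendsto_const_nhds.sub hsmall

theorem IsQuasiMAccretiveWith.mem_closure_graph_lcompPMap_adjoint [CompleteSpace H]
    {C : H →ₗ.[ℝ] H} {Res : ℝ → H →L[ℝ] H} {η₀ M : ℝ} (hq : IsQuasiMAccretiveWith C Res η₀ M)
    (hdense : Dense (C.domain : Set H)) (hdense' : Dense (C.adjoint.domain : Set H))
    {α T : H →L[ℝ] H} {hα : ∀ x ∈ C.domain, α x ∈ C.domain}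
    (hT : ∀ x : C.domain, T (x : H) = α (C x) - C ⟨α x, hα x x.2⟩)
    (v : (lcompPMap α C).adjoint.domain) :
    ((v : H), (lcompPMap α C).adjoint v - adjoint T v) ∈
      closure ((lcompPMap (adjoint α) C.adjoint).graph : Set (H × H)) := by
  obtain ⟨hη₀, hRes⟩ := hq
  set η : ℕ → ℝ := fun n => η₀ / (n + 1)
  have hη : ∀ n, 0 < η n := fun n => by positivity
  have hηIcc : ∀ n, η n ∈ Set.Icc 0 η₀ := fun n =>
    ⟨(hη n).le, div_le_self hη₀.le (by simp)⟩
  have hη0 : Tendsto η atTop (𝓝 0) := by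
    simpa [η, div_eq_mul_inv] using tendsto_one_div_add_atTop_nhds_zero_nat.const_mul η₀
  have hR : ∀ n, IsResolvent C (η n) (Res (η n)) := fun n => (hRes _ (hηIcc n)).1
  have hM : ∀ n, ‖adjoint (Res (η n))‖ ≤ M := fun n =>
    (adjoint.norm_map _).trans_le (hRes _ (hηIcc n)).2
  have hconv := tendsto_adjoint_resolvent_apply hdense hdense' hR (fun n => (hRes _ (hηIcc n)).2)
    hη0
  let u n : (lcompPMap (adjoint α) C.adjoint).domain :=
    ⟨adjoint (Res (η n)) v, (hR n).adjoint_apply_mem_adjoint_domain (hη n).ne' v⟩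
  have hB : Tendsto (fun n => lcompPMap (adjoint α) C.adjoint (u n)) atTop
      (𝓝 ((lcompPMap α C).adjoint v - adjoint T v)) :=
    ((hconv _).sub (tendsto_apply_apply_of_norm_le (R₀ := ContinuousLinearMap.id ℝ H) hM
      (hconv _) (((adjoint T).continuous.tendsto _).comp (hconv v)))).congr
      fun n => ((hR n).adjoint_lcompPMap_adjoint_apply (hη n).ne' hdense hT v).symm
  exact mem_closure_of_tendsto ((hconv v).prodMk_nhds hB)
    (Eventually.of_forall fun n => LinearPMap.mem_graph _ (u n))

theorem adjoint_alphaC_eq_general [CompleteSpace H]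
    (C : H →ₗ.[ℝ] H) (hdense : Dense (C.domain : Set H))
    (hdense' : Dense (C.adjoint.domain : Set H))
    (Res : ℝ → H →L[ℝ] H) (η₀ M : ℝ)
    (hq : IsQuasiMAccretiveWith C Res η₀ M)
    (α : H →L[ℝ] H) (hα : ∀ x ∈ C.domain, α x ∈ C.domain)
    (T : H →L[ℝ] H)
    (hT : ∀ x : C.domain, T (x : H) = α (C x) - C ⟨α x, hα x x.2⟩)
    (T' : H →L[ℝ] H)
    (hT' : ∀ v : C.adjoint.domain,
      ∃ h : ContinuousLinearMap.adjoint α (v : H) ∈ C.adjoint.domain,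
        T' (v : H) = C.adjoint ⟨ContinuousLinearMap.adjoint α (v : H), h⟩ -
          ContinuousLinearMap.adjoint α (C.adjoint v)) :
    (lcompPMap α C).adjoint =
      (lcompPMap (ContinuousLinearMap.adjoint α) C.adjoint).closure +
        (T' : H →ₗ[ℝ] H).toPMap ⊤ := by
  have hA : Dense ((lcompPMap α C).domain : Set H) := hdense
  refine LinearPMap.eq_closure_add_toPMap_top (LinearPMap.adjoint_isClosed hA)
    ((isFormalAdjoint_lcompPMap_add hdense hT').le_adjoint hA) fun v => ?_
  rw [← adjoint_commutator_eq hdense hdense' hT hT']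
  exact hq.mem_closure_graph_lcompPMap_adjoint hdense hdense' hT v

/-- for quasi-m-accretive `C` and bounded `α` leaving `dom C` invariant with
continuous commutator `[α,C]`, one has `(αC)* = cl(α*C*) + cl([C*,α*])`; here `T'` is the
continuous extension of the commutator `[C*,α*] = C*α* - α*C*` defined on `dom C*`. -/
theorem adjoint_alphaC_eq [CompleteSpace H]
    (C : H →ₗ.[ℝ] H) (hdense : Dense (C.domain : Set H)) (hclosed : C.IsClosed)
    (hdense' : Dense (C.adjoint.domain : Set H))
    (Res : ℝ → H →L[ℝ] H) (η₀ M : ℝ)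
    (hq : IsQuasiMAccretiveWith C Res η₀ M)
    (α : H →L[ℝ] H) (hα : ∀ x ∈ C.domain, α x ∈ C.domain)
    (T : H →L[ℝ] H)
    (hT : ∀ x : C.domain, T (x : H) = α (C x) - C ⟨α x, hα x x.2⟩)
    (T' : H →L[ℝ] H)
    (hT' : ∀ v : C.adjoint.domain,
      ∃ h : ContinuousLinearMap.adjoint α (v : H) ∈ C.adjoint.domain,
        T' (v : H) = C.adjoint ⟨ContinuousLinearMap.adjoint α (v : H), h⟩ -
          ContinuousLinearMap.adjoint α (C.adjoint v)) :
    (lcompPMap α C).adjoint =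
      (lcompPMap (ContinuousLinearMap.adjoint α) C.adjoint).closure +
        (T' : H →ₗ[ℝ] H).toPMap ⊤ :=
  adjoint_alphaC_eq_general C hdense hdense' Res η₀ M hq α hα T hT T' hT'
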